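/- arXiv:1101.4352 — 3 statements merged into one kernel-verified Lean document; each statement's English description precedes it below -/
import Mathlib

section
/- For θ, x ∈ [0, π], |cos θ - cos x| ≥ (1/π)(sin θ + sin x)·|θ - x|. -/
open Real

theorem abs_cos_sub_cos_ge (θ x : ℝ) (hθ : θ ∈ Set.Icc 0 π) (hx : x ∈ Set.Icc 0 π) :
    (1 / π) * (Real.sin θ + Real.sin x) * |θ - x| ≤ |Real.cos θ - Real.cos x| := by
  obtain ⟨hθ0, hθπ⟩ := hθ
  obtain ⟨hx0, hxπ⟩ := hx
  have hπ : (0:ℝ) < π := pi_pos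
  -- concavity
  have hconc := (strictConcaveOn_sin_Icc.concaveOn).2 ⟨hθ0, hθπ⟩ ⟨hx0, hxπ⟩
      (by norm_num : (0:ℝ) ≤ 2⁻¹) (by norm_num : (0:ℝ) ≤ 2⁻¹) (by norm_num)
  simp only [smul_eq_mul] at hconc
  have hs : (Real.sin θ + Real.sin x) / 2 ≤ Real.sin ((θ + x) / 2) := by
    have : (2:ℝ)⁻¹ * θ + 2⁻¹ * x = (θ + x) / 2 := by ring
    rw [this] at hconc
    linarith
  have hs0 : 0 ≤ Real.sin ((θ + x) / 2) :=
    Real.sin_nonneg_of_nonneg_of_le_pi (by linarith) (by linarith)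
  have habs : 2 / π * |(θ - x) / 2| ≤ |Real.sin ((θ - x) / 2)| := by
    apply mul_abs_le_abs_sin
    rw [abs_div, abs_two, div_le_div_iff₀ (by norm_num) (by norm_num)]
    have : |θ - x| ≤ π := abs_sub_le_iff.mpr ⟨by linarith, by linarith⟩
    linarith
  have hsum0 : 0 ≤ Real.sin θ + Real.sin x := by
    have := Real.sin_nonneg_of_nonneg_of_le_pi hθ0 hθπ
    have := Real.sin_nonneg_of_nonneg_of_le_pi hx0 hxπ
    linarith
  rw [Real.cos_sub_cos, abs_mul, abs_mul]
  have h2 : |(-2 : ℝ)| = 2 := by norm_num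
  rw [h2, abs_of_nonneg hs0]
  have key : 2 / π * |(θ - x) / 2| = |θ - x| / π := by
    rw [abs_div, abs_two]; ring
  rw [key] at habs
  have h1 : (1 / π) * (Real.sin θ + Real.sin x) * |θ - x|
      = 2 * ((Real.sin θ + Real.sin x) / 2) * (|θ - x| / π) := by
    field_simp
  rw [h1]
  have habs0 : 0 ≤ |θ - x| / π := by positivity
  calc 2 * ((Real.sin θ + Real.sin x) / 2) * (|θ - x| / π)
      ≤ 2 * Real.sin ((θ + x) / 2) * (|θ - x| / π) := by
        apply mul_le_mul_of_nonneg_right _ habs0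
        linarith
    _ ≤ 2 * Real.sin ((θ + x) / 2) * |Real.sin ((θ - x) / 2)| :=
        mul_le_mul_of_nonneg_left habs (by linarith)
end

section
/- Let l ≥ 1 and let s_0, ..., s_l be the Chebyshev nodes s_k = (s̄+s̲)/2 - (s̄-s̲)/2 · cos((2k+1)π/(2l+2)) in an interval [s̲, s̄] with s̲ < s̄. Then every elementary Lagrange polynomial L_{s_k}(s) = ∏_{j≠k} (s - s_j)/(s_k - s_j) satisfies |L_{s_k}(s)| ≤ π for all s ∈ [s̲, s̄]. -/
/-! The Chebyshev nodes `cos θⱼ`, `θⱼ = (2j+1)π/(2n)`, are the roots of `Tₙ`, so the Lagrange basis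
polynomial of the node `xₖ` is `Lₖ(x) = Tₙ(x) / ((x - xₖ) Tₙ'(xₖ))`. For `x = cos t` we have
`Tₙ(x) = cos (n t)` and `|Tₙ'(xₖ)| sin θₖ = n`, so the bound reduces to
`|cos (n t)| sin θₖ ≤ π n |cos t - cos θₖ|`. Since `cos (n θₖ) = 0`, the left side is at most
`n |t - θₖ| sin θₖ`; writing `cos t - cos θₖ` as a product of sines of `(t ± θₖ)/2`, the claim
follows from Jordan's inequality and the concavity of `sin` on `[0, π]`. An affine change of
variable carries `[s̲, s̄]` to `[-1, 1]` without changing the Lagrange basis. -/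

open Real Finset Polynomial Polynomial.Chebyshev

namespace Lagrange

variable {F ι : Type*} [Field F] [DecidableEq ι] {s : Finset ι} {v : ι → F} {i : ι}

theorem eval_basis (x : F) :
    (Lagrange.basis s v i).eval x = ∏ j ∈ s.erase i, (x - v j) / (v i - v j) := by
  simp only [Lagrange.basis, basisDivisor, eval_prod, eval_mul, eval_C, eval_sub, eval_X,
    div_eq_inv_mul]

theorem eval_basis_eq_eval_div_of_eq_C_mul_nodal {p : F[X]} {a : F} (ha : a ≠ 0)
    (hp : p = C a * nodal s v) (hi : i ∈ s) {x : F} (hx : x ≠ v i) :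
    (Lagrange.basis s v i).eval x = p.eval x / ((x - v i) * (derivative p).eval (v i)) := by
  rw [eval_basis_not_at_node hi hx, nodalWeight_eq_eval_derivative_nodal hi, hp,
    derivative_C_mul]
  simp only [eval_mul, eval_C]
  rw [mul_left_comm (x - v i), mul_div_mul_left _ _ ha, div_eq_mul_inv, mul_inv]
  ring

theorem eval_basis_affine {a b : F} (ha : a ≠ 0) (x : F) :
    (Lagrange.basis s (fun j ↦ a * v j + b) i).eval (a * x + b) =
      (Lagrange.basis s v i).eval x := by
  simp only [eval_basis]
  refine prod_congr rfl fun j _ ↦ ?_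
  rw [add_sub_add_right_eq_sub, add_sub_add_right_eq_sub, ← mul_sub, ← mul_sub,
    mul_div_mul_left _ _ ha]

end Lagrange

theorem sin_le_two_mul_sin_add_div_two {t β : ℝ} (ht : t ∈ Set.Icc 0 π) (hβ : β ∈ Set.Icc 0 π) :
    sin β ≤ 2 * sin ((t + β) / 2) := by
  have hconc := strictConcaveOn_sin_Icc.concaveOn.2 ht hβ (by norm_num : (0 : ℝ) ≤ 1 / 2)
    (by norm_num : (0 : ℝ) ≤ 1 / 2) (by norm_num)
  simp only [smul_eq_mul] at hconc
  rw [show 1 / 2 * t + 1 / 2 * β = (t + β) / 2 by ring] at hconc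
  linarith [sin_nonneg_of_mem_Icc ht]

theorem abs_sub_le_pi_mul_abs_sin_sub_div_two {t β : ℝ} (ht : t ∈ Set.Icc 0 π)
    (hβ : β ∈ Set.Icc 0 π) : |t - β| ≤ π * |sin ((t - β) / 2)| := by
  have hδ : |(t - β) / 2| ≤ π / 2 := by
    rw [abs_div, abs_two, div_le_div_iff_of_pos_right two_pos, abs_le]
    constructor <;> linarith [ht.1, ht.2, hβ.1, hβ.2]
  have := mul_abs_le_abs_sin hδ
  rw [abs_div, abs_two] at this
  have hπ := pi_pos
  field_simp at this
  linarith

theorem sin_add_div_two_nonneg {t β : ℝ} (ht : t ∈ Set.Icc 0 π) (hβ : β ∈ Set.Icc 0 π) :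
    0 ≤ sin ((t + β) / 2) :=
  sin_nonneg_of_nonneg_of_le_pi (by linarith [ht.1, hβ.1]) (by linarith [ht.2, hβ.2])

theorem abs_cos_sub_cos_of_mem_Icc {t β : ℝ} (ht : t ∈ Set.Icc 0 π) (hβ : β ∈ Set.Icc 0 π) :
    |cos t - cos β| = 2 * sin ((t + β) / 2) * |sin ((t - β) / 2)| := by
  rw [cos_sub_cos, abs_mul, abs_mul, abs_neg, abs_two,
    abs_of_nonneg (sin_add_div_two_nonneg ht hβ)]

theorem abs_cos_mul_mul_sin_le {m t β : ℝ} (ht : t ∈ Set.Icc 0 π) (hβ : β ∈ Set.Icc 0 π)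
    (hroot : cos (m * β) = 0) :
    |cos (m * t)| * sin β ≤ π * |m| * |cos t - cos β| := by
  have := sin_add_div_two_nonneg ht hβ
  calc |cos (m * t)| * sin β = |cos (m * t) - cos (m * β)| * sin β := by rw [hroot, sub_zero]
    _ ≤ |m| * |t - β| * (2 * sin ((t + β) / 2)) := by
      gcongr
      · exact sin_nonneg_of_mem_Icc hβ
      · rw [← abs_mul, mul_sub]; exact abs_cos_sub_cos_le _ _
      · exact sin_le_two_mul_sin_add_div_two ht hβ
    _ ≤ |m| * (π * |sin ((t - β) / 2)|) * (2 * sin ((t + β) / 2)) := by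
      gcongr
      · exact abs_sub_le_pi_mul_abs_sin_sub_div_two ht hβ
    _ = π * |m| * |cos t - cos β| := by rw [abs_cos_sub_cos_of_mem_Icc ht hβ]; ring

theorem eval_derivative_T_real_cos_mul_sin (n : ℤ) (θ : ℝ) :
    (derivative (T ℝ n)).eval (cos θ) * sin θ = n * sin (n * θ) := by
  rw [T_derivative_eq_U, eval_mul, eval_intCast, mul_assoc, U_real_cos]
  push_cast
  ring_nf

noncomputable def chebyshevAngle (n k : ℕ) : ℝ := (2 * k + 1) * π / (2 * n)

theorem chebyshevAngle_mem_Ioo {n k : ℕ} (hk : k < n) : chebyshevAngle n k ∈ Set.Ioo 0 π := by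
  have hkn : (k : ℝ) + 1 ≤ n := by exact_mod_cast hk
  have hn : (0 : ℝ) < n := by linarith [k.cast_nonneg (α := ℝ)]
  refine ⟨by unfold chebyshevAngle; positivity, ?_⟩
  rw [chebyshevAngle, div_lt_iff₀ (by positivity)]
  nlinarith [pi_pos]

theorem nat_mul_chebyshevAngle {n : ℕ} (hn : n ≠ 0) (k : ℕ) :
    n * chebyshevAngle n k = k * π + π / 2 := by
  rw [chebyshevAngle]
  field_simp

theorem cos_nat_mul_chebyshevAngle {n : ℕ} (hn : n ≠ 0) (k : ℕ) :
    cos (n * chebyshevAngle n k) = 0 := by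
  rw [nat_mul_chebyshevAngle hn, cos_add_pi_div_two, sin_nat_mul_pi, neg_zero]

theorem abs_sin_nat_mul_chebyshevAngle {n : ℕ} (hn : n ≠ 0) (k : ℕ) :
    |sin (n * chebyshevAngle n k)| = 1 := by
  rw [nat_mul_chebyshevAngle hn, sin_add_pi_div_two, abs_cos_eq_one_iff]
  exact ⟨k, by push_cast; ring⟩

theorem abs_eval_derivative_T_real_cos_chebyshevAngle_mul_abs_sin {n : ℕ} (hn : n ≠ 0) (k : ℕ) :
    |(derivative (T ℝ n)).eval (cos (chebyshevAngle n k))| * |sin (chebyshevAngle n k)| = n := by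
  rw [← abs_mul, eval_derivative_T_real_cos_mul_sin, abs_mul, Int.cast_natCast,
    abs_sin_nat_mul_chebyshevAngle hn, Nat.abs_cast, mul_one]

theorem injOn_cos_chebyshevAngle (n : ℕ) :
    Set.InjOn (fun k ↦ cos (chebyshevAngle n k)) (range n) :=
  (range n).nodup_map_iff_injOn.mp (roots_T_real_nodup n)

theorem T_real_eq_C_mul_nodal (n : ℕ) :
    T ℝ n =
      C (T ℝ n).leadingCoeff * Lagrange.nodal (range n) (fun k ↦ cos (chebyshevAngle n k)) := by
  have hroots : (T ℝ n).roots = (range n).val.map (fun k ↦ cos (chebyshevAngle n k)) := by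
    rw [roots_T_real, image_val]
    exact (roots_T_real_nodup n).dedup
  have hcard : Multiset.card (T ℝ n).roots = (T ℝ n).natDegree := by
    simp [hroots]
  conv_lhs => rw [← C_leadingCoeff_mul_prod_multiset_X_sub_C hcard]
  rw [hroots, Multiset.map_map, Lagrange.nodal]
  rfl

theorem abs_eval_basis_chebyshev_le_pi {n k : ℕ} (hk : k < n) {y : ℝ} (hy : y ∈ Set.Icc (-1) 1) :
    |(Lagrange.basis (range n) (fun j ↦ cos (chebyshevAngle n j)) k).eval y| ≤ π := by
  have hkn : k ∈ range n := mem_range.mpr hk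
  by_cases hyk : y = cos (chebyshevAngle n k)
  · rw [hyk, Lagrange.eval_basis_self (injOn_cos_chebyshevAngle n) hkn, abs_one]
    linarith [pi_gt_three]
  have hn : n ≠ 0 := by omega
  have hlc : (T ℝ n).leadingCoeff ≠ 0 := by simp
  rw [Lagrange.eval_basis_eq_eval_div_of_eq_C_mul_nodal hlc (T_real_eq_C_mul_nodal n) hkn hyk]
  set β := chebyshevAngle n k
  have hβ := chebyshevAngle_mem_Ioo hk
  have hsin : 0 < sin β := sin_pos_of_mem_Ioo hβ
  have hderiv := abs_eval_derivative_T_real_cos_chebyshevAngle_mul_abs_sin hn k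
  rw [abs_of_pos hsin] at hderiv
  obtain ⟨t, ht, rfl⟩ : ∃ t ∈ Set.Icc 0 π, cos t = y :=
    ⟨arccos y, ⟨arccos_nonneg y, arccos_le_pi y⟩, cos_arccos hy.1 hy.2⟩
  have hden : 0 < |cos t - cos β| * |(derivative (T ℝ n)).eval (cos β)| := by
    have : 0 < |(derivative (T ℝ n)).eval (cos β)| := by
      by_contra! h
      rw [abs_nonpos_iff.mp h, abs_zero, zero_mul] at hderiv
      exact hn (by exact_mod_cast hderiv.symm)
    have : cos t - cos β ≠ 0 := sub_ne_zero.mpr hyk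
    positivity
  rw [abs_div, abs_mul, div_le_iff₀ hden, T_real_cos, Int.cast_natCast]
  refine le_of_mul_le_mul_right ?_ hsin
  calc |cos (n * t)| * sin β ≤ π * |(n : ℝ)| * |cos t - cos β| :=
        abs_cos_mul_mul_sin_le ht (Set.Ioo_subset_Icc_self hβ) (cos_nat_mul_chebyshevAngle hn k)
    _ = π * (|cos t - cos β| * |(derivative (T ℝ n)).eval (cos β)|) * sin β := by
      rw [Nat.abs_cast, ← hderiv]; ring

theorem chebyshev_lagrange_basis_le_pi_general (l : ℕ) (slo shi : ℝ) (hs : slo < shi)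
    (node : ℕ → ℝ)
    (hnode : ∀ k, node k =
      (shi + slo) / 2 - (shi - slo) / 2 * Real.cos ((2 * (k : ℝ) + 1) * π / (2 * l + 2)))
    (k : ℕ) (hk : k ≤ l) (s : ℝ) (hs' : s ∈ Set.Icc slo shi) :
    |∏ j ∈ (Finset.range (l + 1)).erase k, (s - node j) / (node k - node j)| ≤ π := by
  have hr : -((shi - slo) / 2) ≠ 0 := by linarith
  have hnode' :
      node = fun j ↦ -((shi - slo) / 2) * cos (chebyshevAngle (l + 1) j) + (shi + slo) / 2 := by
    ext j
    rw [hnode, chebyshevAngle]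
    push_cast
    ring_nf
  obtain ⟨y, hy, rfl⟩ : ∃ y ∈ Set.Icc (-1) 1, s = -((shi - slo) / 2) * y + (shi + slo) / 2 := by
    refine ⟨((shi + slo) / 2 - s) / ((shi - slo) / 2), ⟨?_, ?_⟩, ?_⟩
    · rw [le_div_iff₀ (by linarith)]; linarith [hs'.2]
    · rw [div_le_iff₀ (by linarith)]; linarith [hs'.1]
    · have : shi - slo ≠ 0 := by linarith
      field_simp
      ring
  rw [← Lagrange.eval_basis, hnode', Lagrange.eval_basis_affine hr]
  exact abs_eval_basis_chebyshev_le_pi (by omega) hy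

/-- Elementary Lagrange polynomials at Chebyshev nodes are bounded by π on the interval. -/
theorem chebyshev_lagrange_basis_le_pi (l : ℕ) (hl : 1 ≤ l) (slo shi : ℝ) (hs : slo < shi)
    (node : ℕ → ℝ)
    (hnode : ∀ k, node k =
      (shi + slo) / 2 - (shi - slo) / 2 * Real.cos ((2 * (k : ℝ) + 1) * π / (2 * l + 2)))
    (k : ℕ) (hk : k ≤ l) (s : ℝ) (hs' : s ∈ Set.Icc slo shi) :
    |∏ j ∈ (Finset.range (l + 1)).erase k, (s - node j) / (node k - node j)| ≤ π :=
  chebyshev_lagrange_basis_le_pi_general l slo shi hs node hnode k hk s hs'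
end

section
/- For l ≥ 1, (1/(l+1)) ∑_{k=0}^{l} cot((2k+1)π/(4(l+1))) is asymptotically equivalent to (2/π) ln(l+1) as l → ∞, i.e. the ratio of the two quantities tends to 1. -/
/-!
On `(0, π/2]` one has `1/θ - θ/2 ≤ cot θ ≤ 1/θ`. At the nodes `θ_k = (2k+1)π/(4n)` the mean
`(1/n) ∑_{k<n} cot θ_k` therefore differs by at most `π/4` from
`(1/n) ∑_{k<n} 1/θ_k = (4/π) ∑_{k<n} 1/(2k+1)`, and this odd harmonic sum is `H_{2n} - H_n/2`,
which is `(log n)/2 + O(1)`. A bounded error is negligible against `(2/π) log n → ∞`.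
-/

open Real Finset Filter Asymptotics Topology

theorem Asymptotics.IsBigO.tendsto_div_one_of_tendsto_atTop {α : Type*} {l : Filter α}
    {u v : α → ℝ} (huv : (u - v) =O[l] (fun _ => (1 : ℝ))) (hv : Tendsto v l atTop) :
    Tendsto (u / v) l (𝓝 1) := by
  have hv' : (fun _ => (1 : ℝ)) =o[l] v :=
    (isLittleO_one_left_iff ℝ).mpr (tendsto_abs_atTop_atTop.comp hv)
  exact (isEquivalent_iff_tendsto_one (hv.eventually_ne_atTop 0)).mp
    (huv.trans_isLittleO hv').isEquivalent

namespace Real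

theorem cot_le_inv {θ : ℝ} (h0 : 0 < θ) (hθ : θ ≤ π / 2) : cot θ ≤ θ⁻¹ := by
  rcases hθ.lt_or_eq with hθ | rfl
  · rw [cot_eq_cos_div_sin, ← inv_div, ← tan_eq_sin_div_cos]
    exact inv_anti₀ h0 (lt_tan h0 hθ).le
  · rw [cot_eq_cos_div_sin, cos_pi_div_two, zero_div]
    positivity

theorem inv_sub_half_le_cot {θ : ℝ} (h0 : 0 < θ) (hθ : θ ≤ π / 2) : θ⁻¹ - θ / 2 ≤ cot θ := by
  have hsin : 0 < sin θ := sin_pos_of_pos_of_lt_pi h0 (by linarith [pi_pos])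
  have hcos : 0 ≤ cos θ := cos_nonneg_of_mem_Icc ⟨by linarith [pi_pos], hθ⟩
  calc θ⁻¹ - θ / 2 = (1 - θ ^ 2 / 2) / θ := by field_simp
    _ ≤ cos θ / θ := by gcongr; exact one_sub_sq_div_two_le_cos
    _ ≤ cos θ / sin θ := div_le_div_of_nonneg_left hcos hsin (sin_le h0.le)
    _ = cot θ := (cot_eq_cos_div_sin θ).symm

theorem abs_cot_sub_inv_le {θ : ℝ} (h0 : 0 < θ) (hθ : θ ≤ π / 2) : |cot θ - θ⁻¹| ≤ θ / 2 := by
  rw [abs_le]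
  constructor <;> linarith [cot_le_inv h0 hθ, inv_sub_half_le_cot h0 hθ]

end Real

noncomputable def oddHarmonic (n : ℕ) : ℝ := ∑ k ∈ range n, (2 * (k : ℝ) + 1)⁻¹

theorem oddHarmonic_add_half_harmonic (n : ℕ) :
    oddHarmonic n + harmonic n / 2 = harmonic (2 * n) := by
  induction n with
  | zero => simp [oddHarmonic]
  | succ n ih =>
    rw [show 2 * (n + 1) = 2 * n + 1 + 1 by ring, harmonic_succ, harmonic_succ, harmonic_succ]
    simp only [oddHarmonic, sum_range_succ] at ih ⊢
    push_cast
    rw [← ih]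
    field_simp
    ring

theorem tendsto_oddHarmonic_sub_log :
    Tendsto (fun n : ℕ => oddHarmonic n - log n / 2) atTop
      (𝓝 (eulerMascheroniConstant / 2 + log 2)) := by
  have h2n : Tendsto (fun n : ℕ => (harmonic (2 * n) : ℝ) - log (2 * n : ℕ)) atTop
      (𝓝 eulerMascheroniConstant) :=
    tendsto_harmonic_sub_log.comp (tendsto_id.const_mul_atTop' two_pos)
  have hlim := (h2n.sub (tendsto_harmonic_sub_log.div_const 2)).add_const (log 2)
  rw [show eulerMascheroniConstant - eulerMascheroniConstant / 2 + log 2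
    = eulerMascheroniConstant / 2 + log 2 by ring] at hlim
  refine hlim.congr' ?_
  filter_upwards [eventually_ne_atTop 0] with n hn
  rw [← oddHarmonic_add_half_harmonic, Nat.cast_mul, Nat.cast_ofNat,
    log_mul two_ne_zero (Nat.cast_ne_zero.mpr hn)]
  ring

noncomputable def cotMean (n : ℕ) : ℝ :=
  (n : ℝ)⁻¹ * ∑ k ∈ range n, cot ((2 * (k : ℝ) + 1) * π / (4 * n))

theorem abs_cotMean_sub_oddHarmonic_le (n : ℕ) : |cotMean n - 4 / π * oddHarmonic n| ≤ π / 4 := by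
  rcases n.eq_zero_or_pos with rfl | hn
  · simp only [cotMean, oddHarmonic, range_zero, sum_empty, mul_zero, sub_self, abs_zero]
    positivity
  have hn' : (0 : ℝ) < n := Nat.cast_pos.mpr hn
  set θ : ℕ → ℝ := fun k => (2 * (k : ℝ) + 1) * π / (4 * n) with hθ
  have hθ_pos : ∀ k, 0 < θ k := fun k => by positivity
  have hθ_le : ∀ k ∈ range n, θ k ≤ π / 2 := fun k hk => by
    have : (k : ℝ) + 1 ≤ n := by exact_mod_cast mem_range.mp hk
    rw [hθ, div_le_iff₀ (by positivity)]
    nlinarith [pi_pos]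
  have hsplit : cotMean n - 4 / π * oddHarmonic n =
      (n : ℝ)⁻¹ * ∑ k ∈ range n, (cot (θ k) - (θ k)⁻¹) := by
    rw [sum_sub_distrib, mul_sub]
    congr 1
    rw [oddHarmonic, mul_sum, mul_sum]
    refine sum_congr rfl fun k _ => ?_
    simp only [hθ]
    field_simp
  calc |cotMean n - 4 / π * oddHarmonic n|
      ≤ (n : ℝ)⁻¹ * ∑ k ∈ range n, θ k / 2 := by
        rw [hsplit, abs_mul, abs_of_pos (inv_pos.mpr hn')]
        gcongr
        refine (abs_sum_le_sum_abs _ _).trans (sum_le_sum fun k hk => ?_)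
        exact abs_cot_sub_inv_le (hθ_pos k) (hθ_le k hk)
    _ ≤ (n : ℝ)⁻¹ * ∑ k ∈ range n, π / 4 := by
        gcongr (n : ℝ)⁻¹ * ?_
        exact sum_le_sum fun k hk => by linarith [hθ_le k hk]
    _ = π / 4 := by
        rw [sum_const, card_range, nsmul_eq_mul]
        field_simp

theorem isBigO_cotMean_sub_log :
    (fun n : ℕ => cotMean n - 2 / π * log n) =O[atTop] (fun _ => (1 : ℝ)) := by
  have hcot : (fun n => cotMean n - 4 / π * oddHarmonic n) =O[atTop] (fun _ => (1 : ℝ)) :=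
    isBigO_of_le' _ fun n => by simpa using abs_cotMean_sub_oddHarmonic_le n
  have hodd := (tendsto_oddHarmonic_sub_log.isBigO_one ℝ).const_mul_left (4 / π)
  refine (hcot.add hodd).congr_left fun n => ?_
  ring

theorem tendsto_cotMean_div_log :
    Tendsto (fun n : ℕ => cotMean n / (2 / π * log n)) atTop (𝓝 1) :=
  isBigO_cotMean_sub_log.tendsto_div_one_of_tendsto_atTop
    ((tendsto_log_atTop.comp tendsto_natCast_atTop_atTop).const_mul_atTop (by positivity))

/-- Asymptotics of the Lebesgue constant for Lagrange interpolation at Chebyshev nodes: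
(1/(l+1)) ∑_{k=0}^{l} cot((2k+1)π/(4(l+1))) ∼ (2/π) ln(l+1) as l → ∞. -/
theorem lebesgue_constant_asymptotics :
    Tendsto
      (fun l : ℕ =>
        ((1 / ((l : ℝ) + 1)) *
            ∑ k ∈ Finset.range (l + 1),
              Real.cos ((2 * (k : ℝ) + 1) * π / (4 * ((l : ℝ) + 1))) /
                Real.sin ((2 * (k : ℝ) + 1) * π / (4 * ((l : ℝ) + 1)))) /
          ((2 / π) * Real.log ((l : ℝ) + 1)))
      atTop (nhds 1) := by
  convert tendsto_cotMean_div_log.comp (tendsto_add_atTop_nat 1) using 2 with l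
  simp [cotMean, cot_eq_cos_div_sin]
end
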